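/- If p(x_{t-Δt}|x_t,x_0) = p(x_{t-Δt}|x_0) (conditional independence, γ_t = 0), then E[x_{t-Δt}|x_t] = (μ_{t-Δt}/μ_t)(x_t + σ_t² ∇ log p_t(x_t)), i.e., the reverse mean is μ_{t-Δt} times the Tweedie denoised estimate E[x_0|x_t]. -/

import Mathlib

/-!
Tweedie's formula for a Gaussian mixture `p(x) = ∫ f(y) φ_σ(x - μ y) dy`: since
`∇φ_σ(z) = -σ⁻² φ_σ(z) z`, differentiating under the integral gives
`σ² ∇p(x) = ∫ f(y) φ_σ(x - μ y) (μ y - x) dy = μ ∫ f(y) φ_σ(x - μ y) y dy - p(x) x`,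
so `x + σ² ∇ log p(x) = μ E[x₀ | x_t = x]`. When the reverse kernel ignores `x_t`, the reverse
mean is `μ_{t-Δt} E[x₀ | x_t = x]`, which is the claim after dividing by `μ_t`.
Differentiation under the integral is dominated by `|f|` because `r e^{-r²/2σ²} ≤ σ`.
-/

open MeasureTheory Real

/-- Isotropic Gaussian density on `ℝ^N` with standard deviation `σ`. -/
noncomputable def gaussPdf (N : ℕ) (σ : ℝ) (z : EuclideanSpace ℝ (Fin N)) : ℝ :=
  (2 * π * σ ^ 2) ^ (-(N : ℝ) / 2) * Real.exp (-‖z‖ ^ 2 / (2 * σ ^ 2))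

open InnerProductSpace

theorem mul_exp_neg_sq_div_le {σ : ℝ} (hσ : 0 < σ) (r : ℝ) :
    r * exp (-r ^ 2 / (2 * σ ^ 2)) ≤ σ := by
  rw [neg_div, exp_neg, ← div_eq_mul_inv, div_le_iff₀ (exp_pos _)]
  have hgap : σ * (r ^ 2 / (2 * σ ^ 2) + 1) - r = ((r - σ) ^ 2 + σ ^ 2) / (2 * σ) := by
    field_simp; ring
  calc r ≤ σ * (r ^ 2 / (2 * σ ^ 2) + 1) := by
        have : 0 ≤ ((r - σ) ^ 2 + σ ^ 2) / (2 * σ) := by positivity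
        linarith
    _ ≤ σ * exp (r ^ 2 / (2 * σ ^ 2)) := by gcongr; exact add_one_le_exp _

section Gradient

variable {E : Type*} [NormedAddCommGroup E] [InnerProductSpace ℝ E] [CompleteSpace E]
  {f : E → ℝ} {g x : E}

theorem HasGradientAt.const_mul (h : HasGradientAt f g x) (c : ℝ) :
    HasGradientAt (fun x => c * f x) (c • g) x := by
  rw [hasGradientAt_iff_hasFDerivAt] at h ⊢
  simpa using h.const_mul c

theorem HasGradientAt.log (h : HasGradientAt f g x) (hx : f x ≠ 0) :
    HasGradientAt (fun x => Real.log (f x)) ((f x)⁻¹ • g) x := by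
  rw [hasGradientAt_iff_hasFDerivAt] at h ⊢
  simpa using h.log hx

theorem hasGradientAt_integral_of_dominated_of_gradient_le
    {α : Type*} [MeasurableSpace α] {μ : Measure α}
    {F : E → α → ℝ} {G : E → α → E} {x₀ : E} {bound : α → ℝ} {s : Set E} (hs : s ∈ nhds x₀)
    (hF_meas : ∀ᶠ x in nhds x₀, AEStronglyMeasurable (F x) μ) (hF_int : Integrable (F x₀) μ)
    (hG_meas : AEStronglyMeasurable (G x₀) μ)
    (h_bound : ∀ᵐ a ∂μ, ∀ x ∈ s, ‖G x a‖ ≤ bound a) (bound_integrable : Integrable bound μ)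
    (h_diff : ∀ᵐ a ∂μ, ∀ x ∈ s, HasGradientAt (F · a) (G x a) x) :
    HasGradientAt (fun x => ∫ a, F x a ∂μ) (∫ a, G x₀ a ∂μ) x₀ := by
  have hG_int : Integrable (G x₀) μ :=
    bound_integrable.mono' hG_meas (h_bound.mono fun a h => h x₀ (mem_of_mem_nhds hs))
  have hcomm : ∫ a, toDual ℝ E (G x₀ a) ∂μ = toDual ℝ E (∫ a, G x₀ a ∂μ) :=
    ContinuousLinearMap.integral_comp_commSL (by simp)
      (toDual ℝ E).toContinuousLinearEquiv.toContinuousLinearMap hG_int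
  rw [hasGradientAt_iff_hasFDerivAt, ← hcomm]
  exact hasFDerivAt_integral_of_dominated_of_fderiv_le hs hF_meas hF_int
    ((toDual ℝ E).continuous.comp_aestronglyMeasurable hG_meas) (by simpa using h_bound)
    bound_integrable (h_diff.mono fun a h x hx => hasGradientAt_iff_hasFDerivAt.mp (h x hx))

end Gradient

theorem gaussPdf_nonneg (N : ℕ) (σ : ℝ) (z : EuclideanSpace ℝ (Fin N)) : 0 ≤ gaussPdf N σ z := by
  unfold gaussPdf; positivity

theorem continuous_gaussPdf (N : ℕ) (σ : ℝ) : Continuous (gaussPdf N σ) := by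
  unfold gaussPdf; fun_prop

theorem gaussPdf_mul_norm_le (N : ℕ) {σ : ℝ} (hσ : 0 < σ) (z : EuclideanSpace ℝ (Fin N)) :
    gaussPdf N σ z * ‖z‖ ≤ (2 * π * σ ^ 2) ^ (-(N : ℝ) / 2) * σ := by
  rw [gaussPdf, mul_assoc, mul_comm (exp _)]
  gcongr
  exact mul_exp_neg_sq_div_le hσ _

theorem hasGradientAt_gaussPdf_sub (N : ℕ) (σ : ℝ) (b x : EuclideanSpace ℝ (Fin N)) :
    HasGradientAt (fun x => gaussPdf N σ (x - b))
      ((-(σ ^ 2)⁻¹ * gaussPdf N σ (x - b)) • (x - b)) x := by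
  have hform (y : EuclideanSpace ℝ (Fin N)) : gaussPdf N σ (y - b) =
      (2 * π * σ ^ 2) ^ (-(N : ℝ) / 2) * exp (-(2 * σ ^ 2)⁻¹ * ‖y - b‖ ^ 2) := by
    rw [gaussPdf]; congr 2; ring
  simp_rw [hasGradientAt_iff_hasFDerivAt, hform]
  refine ((((hasFDerivAt_id x).sub_const b).norm_sq.const_mul _).exp.const_mul _).congr_fderiv ?_
  ext v
  simp [toDual_apply_apply]
  ring

section Mixture

variable {N : ℕ} {σ μ : ℝ} {ν : Measure (EuclideanSpace ℝ (Fin N))}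
  {f : EuclideanSpace ℝ (Fin N) → ℝ}

theorem hasGradientAt_integral_mul_gaussPdf (hσ : 0 < σ) (hf : Integrable f ν)
    (x : EuclideanSpace ℝ (Fin N))
    (hint : Integrable (fun y => f y * gaussPdf N σ (x - μ • y)) ν) :
    HasGradientAt (fun x => ∫ y, f y * gaussPdf N σ (x - μ • y) ∂ν)
      (∫ y, (-(σ ^ 2)⁻¹ * (f y * gaussPdf N σ (x - μ • y))) • (x - μ • y) ∂ν) x := by
  have hcont (x' : EuclideanSpace ℝ (Fin N)) : Continuous fun y => gaussPdf N σ (x' - μ • y) :=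
    (continuous_gaussPdf N σ).comp (by fun_prop)
  have hF_meas (x' : EuclideanSpace ℝ (Fin N)) :
      AEStronglyMeasurable (fun y => f y * gaussPdf N σ (x' - μ • y)) ν :=
    hf.aestronglyMeasurable.mul (hcont x').aestronglyMeasurable
  have hG_meas : AEStronglyMeasurable
      (fun y => (-(σ ^ 2)⁻¹ * (f y * gaussPdf N σ (x - μ • y))) • (x - μ • y)) ν :=
    ((hF_meas x).const_mul _).smul (by fun_prop : Continuous fun y => x - μ • y).aestronglyMeasurable
  have h_bound (x' y : EuclideanSpace ℝ (Fin N)) :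
      ‖(-(σ ^ 2)⁻¹ * (f y * gaussPdf N σ (x' - μ • y))) • (x' - μ • y)‖
        ≤ ‖f y‖ * ((σ ^ 2)⁻¹ * ((2 * π * σ ^ 2) ^ (-(N : ℝ) / 2) * σ)) := by
    rw [norm_smul, norm_mul, norm_mul, norm_neg, norm_inv, norm_pow, Real.norm_of_nonneg hσ.le,
      Real.norm_of_nonneg (gaussPdf_nonneg ..)]
    calc _ = ‖f y‖ * ((σ ^ 2)⁻¹ * (gaussPdf N σ (x' - μ • y) * ‖x' - μ • y‖)) := by ring
      _ ≤ _ := by gcongr ‖f y‖ * (_ * ?_); exact gaussPdf_mul_norm_le N hσ _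
  have h_diff (x' y : EuclideanSpace ℝ (Fin N)) :
      HasGradientAt (fun x => f y * gaussPdf N σ (x - μ • y))
        ((-(σ ^ 2)⁻¹ * (f y * gaussPdf N σ (x' - μ • y))) • (x' - μ • y)) x' := by
    convert (hasGradientAt_gaussPdf_sub N σ (μ • y) x').const_mul (f y) using 1
    rw [smul_smul, mul_left_comm]
  exact hasGradientAt_integral_of_dominated_of_gradient_le Filter.univ_mem
    (Filter.Eventually.of_forall hF_meas) hint hG_meas
    (Filter.Eventually.of_forall fun y x' _ => h_bound x' y) (hf.norm.mul_const _)
    (Filter.Eventually.of_forall fun y x' _ => h_diff x' y)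

theorem tweedie_formula (hσ : 0 < σ) (hf : Integrable f ν) {p : EuclideanSpace ℝ (Fin N) → ℝ}
    (hp : ∀ x, p x = ∫ y, f y * gaussPdf N σ (x - μ • y) ∂ν) {x : EuclideanSpace ℝ (Fin N)}
    (hpx : p x ≠ 0) (hint : Integrable (fun y => f y * gaussPdf N σ (x - μ • y)) ν)
    (hint_mean : Integrable (fun y => (f y * gaussPdf N σ (x - μ • y)) • y) ν) :
    x + σ ^ 2 • gradient (fun z => log (p z)) x
      = (μ / p x) • ∫ y, (f y * gaussPdf N σ (x - μ • y)) • y ∂ν := by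
  have hgrad := hasGradientAt_integral_mul_gaussPdf hσ hf x hint
  rw [← funext hp] at hgrad
  have hsplit : ∫ y, (-(σ ^ 2)⁻¹ * (f y * gaussPdf N σ (x - μ • y))) • (x - μ • y) ∂ν
      = -(σ ^ 2)⁻¹ • (p x • x - μ • ∫ y, (f y * gaussPdf N σ (x - μ • y)) • y ∂ν) :=
    calc _ = ∫ y, -(σ ^ 2)⁻¹ • ((f y * gaussPdf N σ (x - μ • y)) • x
              - μ • (f y * gaussPdf N σ (x - μ • y)) • y) ∂ν := by
          congr 1; funext y; module
      _ = _ := by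
          rw [integral_smul, integral_sub (hint.smul_const x) (hint_mean.fun_smul μ),
            integral_smul_const, integral_smul, ← hp]
  rw [(hgrad.log hpx).gradient, hsplit]
  match_scalars
  · field_simp; ring
  · field_simp

end Mixture

theorem stomax_conditional_expectation_general
    (N : ℕ) (μt μs σt : ℝ)
    (hμt : 0 < μt) (hσt : 0 < σt)
    (f : EuclideanSpace ℝ (Fin N) → ℝ)
    (hf_prob : ∫ y, f y = 1)
    (p : EuclideanSpace ℝ (Fin N) → ℝ)
    (hp : ∀ x, p x = ∫ y, f y * gaussPdf N σt (x - μt • y))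
    (x : EuclideanSpace ℝ (Fin N))
    (hpos : 0 < p x)
    (hint1 : Integrable (fun y => f y * gaussPdf N σt (x - μt • y)))
    (hint2 : Integrable (fun y => (f y * gaussPdf N σt (x - μt • y)) • y)) :
    (p x)⁻¹ • ∫ y, (f y * gaussPdf N σt (x - μt • y)) • (μs • y)
      = (μs / μt) • (x + σt ^ 2 • gradient (fun z => Real.log (p z)) x) := by
  rw [tweedie_formula hσt (integrable_of_integral_eq_one hf_prob) hp hpos.ne' hint1 hint2]
  simp_rw [smul_comm _ μs]
  rw [integral_smul]
  match_scalars
  field_simp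

/-- StoMax (`γ_t = 0`): if the reverse kernel is
`p(x_{t-Δt} | x_t, x_0) = p(x_{t-Δt} | x_0) = N(μ_{t-Δt} x_0, σ_{t-Δt}² I)`
(conditional independence), then
`E[x_{t-Δt} | x_t = x] = (μ_{t-Δt}/μ_t)(x + σ_t² ∇ log p_t(x))`,
i.e. `μ_{t-Δt}` times the Tweedie denoised estimate `E[x_0 | x_t = x]`. -/
theorem stomax_conditional_expectation
    (N : ℕ) (μt μs σt σs : ℝ)
    (hμt : 0 < μt) (hμs : 0 < μs) (hσt : 0 < σt) (hσs : 0 < σs)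
    (f : EuclideanSpace ℝ (Fin N) → ℝ)
    (hf_meas : Measurable f) (hf_nonneg : ∀ y, 0 ≤ f y)
    (hf_prob : ∫ y, f y = 1)
    (p : EuclideanSpace ℝ (Fin N) → ℝ)
    (hp : ∀ x, p x = ∫ y, f y * gaussPdf N σt (x - μt • y))
    (x : EuclideanSpace ℝ (Fin N))
    (hpos : 0 < p x)
    (hint1 : Integrable (fun y => f y * gaussPdf N σt (x - μt • y)))
    (hint2 : Integrable (fun y => (f y * gaussPdf N σt (x - μt • y)) • y))
    (hdiff : DifferentiableAt ℝ p x) :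
    (p x)⁻¹ • ∫ y, (f y * gaussPdf N σt (x - μt • y)) • (μs • y)
      = (μs / μt) • (x + σt ^ 2 • gradient (fun z => Real.log (p z)) x) :=
  stomax_conditional_expectation_general N μt μs σt hμt hσt f hf_prob p hp x hpos hint1 hint2
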